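/- arXiv:2009.03074 — 2 statements merged into one kernel-verified Lean document; each statement's English description precedes it below -/
import Mathlib

section
/- Let G be an r-SPTG in which all non-final locations are urgent. For every location ℓ and every ν ∈ [0,r], if Val_G(ℓ,ν) is finite then there exists f ∈ F_G such that Val_G(ℓ,ν) = f(ν), where F_G = {k + φ_{ℓ′} : ℓ′ ∈ L_Fin, k ∈ ℤ, −(|L|−1)·w_T ≤ k ≤ (|L|−1)·w_T}. -/
/-!
Formalization of (simple) priced timed games (SPTGs) following
"One-Clock Priced Timed Games with Negative Weights"
(Brihaye, Geeraerts, Haddad, Lefaucheux, Monmege).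
-/

noncomputable section
open scoped Classical

/-- `f` decomposes, on `[a,b]`, into `n` affine pieces with rational slopes and
rational interior cutpoints.  (This entails in particular that `f` is finite and
continuous on `[a,b]`.) -/
def AffinePiecesOn (f : ℝ → EReal) (a b : ℝ) (n : ℕ) : Prop :=
  ∃ c : ℕ → ℝ, c 0 = a ∧ c n = b ∧ (∀ i < n, c i < c (i + 1)) ∧
    (∀ i, 0 < i → i < n → ∃ q : ℚ, c i = (q : ℝ)) ∧
    (∀ i < n, ∃ (m : ℚ) (q : ℝ), ∀ x : ℝ, c i ≤ x → x ≤ c (i + 1) →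
      f x = (((m : ℝ) * x + q : ℝ) : EReal))

/-- A cost function over `[a,b]`: either constantly `+∞`, or constantly `-∞`, or
continuous and piecewise affine with rational slopes and finitely many rational
cutpoints. -/
def CostFunctionOn (f : ℝ → EReal) (a b : ℝ) : Prop :=
  (∀ x : ℝ, a ≤ x → x ≤ b → f x = ⊤) ∨ (∀ x : ℝ, a ≤ x → x ≤ b → f x = ⊥) ∨
    ∃ n : ℕ, AffinePiecesOn f a b n

/-- `x` and `y` lie in the same interval (open interval or singleton) of the
partition of the line induced by the finite set of points `P`. -/
def sameInt (P : Finset ℚ) (x y : ℝ) : Prop :=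
  ∀ p ∈ P, (((p : ℝ) < x) ↔ ((p : ℝ) < y)) ∧ ((x < (p : ℝ)) ↔ (y < (p : ℝ)))

/-- An `r`-SPTG (simple priced timed game). Locations are partitioned into those of
player Min, player Max and the final ones; some non-final locations are urgent;
transitions carry integer weights, non-final locations carry integer rates, final
locations carry affine final cost functions.  The clock stays in `[0,r]`. -/
structure SPTG where
  Loc : Type
  [fintypeLoc : Fintype Loc]
  [decEqLoc : DecidableEq Loc]
  isMin : Loc → Prop
  isMax : Loc → Prop
  isFin : Loc → Prop
  partition : ∀ ℓ, (isMin ℓ ∧ ¬isMax ℓ ∧ ¬isFin ℓ) ∨ (¬isMin ℓ ∧ isMax ℓ ∧ ¬isFin ℓ) ∨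
    (¬isMin ℓ ∧ ¬isMax ℓ ∧ isFin ℓ)
  isUrg : Loc → Prop
  urg_not_fin : ∀ ℓ, isUrg ℓ → ¬isFin ℓ
  trans : Loc → Loc → Prop
  trans_not_fin : ∀ ℓ ℓ', trans ℓ ℓ' → ¬isFin ℓ
  r : ℝ
  r_nonneg : 0 ≤ r
  r_le_one : r ≤ 1
  finSlope : Loc → ℝ
  finIntercept : Loc → ℝ
  locWt : Loc → ℤ
  transWt : Loc → Loc → ℤ

attribute [instance] SPTG.fintypeLoc SPTG.decEqLoc

namespace SPTG

/-- The final cost functions have rational coefficients (this is part of the paper's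
definition of an SPTG). -/
def ratFinal (G : SPTG) : Prop :=
  ∀ ℓ : G.Loc, (∃ a : ℚ, G.finSlope ℓ = (a : ℝ)) ∧ ∃ b : ℚ, G.finIntercept ℓ = (b : ℝ)

/-- The final cost function `φ_ℓ`. -/
def finalCost (G : SPTG) (ℓ : G.Loc) (ν : ℝ) : ℝ := G.finSlope ℓ * ν + G.finIntercept ℓ

/-- A configuration: a location together with a clock value. -/
abbrev Conf (G : SPTG) := G.Loc × ℝ

def validConf (G : SPTG) (s : G.Conf) : Prop := 0 ≤ s.2 ∧ s.2 ≤ G.r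

/-- A move: a delay `t` together with a transition (determined by its target). -/
structure Move (G : SPTG) where
  t : ℝ
  tgt : G.Loc

/-- The move `m` is available from configuration `s`. -/
def canMove (G : SPTG) (s : G.Conf) (m : G.Move) : Prop :=
  0 ≤ m.t ∧ s.2 + m.t ≤ G.r ∧ G.trans s.1 m.tgt ∧ (G.isUrg s.1 → m.t = 0)

/-- Cost `π(δ) + t·π(ℓ)` of a move. -/
def moveCost (G : SPTG) (s : G.Conf) (m : G.Move) : ℝ :=
  (G.transWt s.1 m.tgt : ℝ) + m.t * (G.locWt s.1 : ℝ)

def applyMove (G : SPTG) (s : G.Conf) (m : G.Move) : G.Conf := (m.tgt, s.2 + m.t)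

def deadlock (G : SPTG) (s : G.Conf) : Prop := ¬∃ m : G.Move, G.canMove s m

/-- A finite play is represented by its initial configuration together with the
list of successive moves; `ValidFrom s l` states that all these moves are legal. -/
def ValidFrom (G : SPTG) : G.Conf → List G.Move → Prop
  | _, [] => True
  | s, m :: l => G.canMove s m ∧ ValidFrom G (G.applyMove s m) l

/-- Last configuration of a finite play. -/
def endConf (G : SPTG) (s : G.Conf) (l : List G.Move) : G.Conf := l.foldl G.applyMove s

/-- Sum of the weights of the discrete transitions taken along a finite play. -/
def transWtSum (G : SPTG) : G.Conf → List G.Move → ℤ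
  | _, [] => 0
  | s, m :: l => G.transWt s.1 m.tgt + transWtSum G (G.applyMove s m) l

/-- Price of a finite play: the accumulated costs of its moves, plus the final cost
function evaluated at the last configuration if its location is final. -/
def finPrice (G : SPTG) : G.Conf → List G.Move → ℝ
  | s, [] => if G.isFin s.1 then G.finalCost s.1 s.2 else 0
  | s, m :: l => G.moveCost s m + finPrice G (G.applyMove s m) l

/-- A strategy of Min: it prescribes a legal move to every finite play ending in a
non-deadlock configuration owned by Min. -/
structure MinStrategy (G : SPTG) where
  move : G.Conf → List G.Move → Option G.Move
  legal : ∀ s l, G.validConf s → G.ValidFrom s l → G.isMin (G.endConf s l).1 →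
    ¬G.deadlock (G.endConf s l) → ∃ m, move s l = some m ∧ G.canMove (G.endConf s l) m

/-- A strategy of Max. -/
structure MaxStrategy (G : SPTG) where
  move : G.Conf → List G.Move → Option G.Move
  legal : ∀ s l, G.validConf s → G.ValidFrom s l → G.isMax (G.endConf s l).1 →
    ¬G.deadlock (G.endConf s l) → ∃ m, move s l = some m ∧ G.canMove (G.endConf s l) m

/-- One step of the play induced by a pair of strategies. -/
def step (G : SPTG) (σmin : MinStrategy G) (σmax : MaxStrategy G) (s : G.Conf)
    (l : List G.Move) : List G.Move :=
  if G.deadlock (G.endConf s l) then l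
  else if G.isMin (G.endConf s l).1 then
    match σmin.move s l with
    | some m => l ++ [m]
    | none => l
  else
    match σmax.move s l with
    | some m => l ++ [m]
    | none => l

/-- The successive finite prefixes of the unique play determined by an initial
configuration and a pair of strategies. -/
def hist (G : SPTG) (σmin : MinStrategy G) (σmax : MaxStrategy G) (s : G.Conf) :
    ℕ → List G.Move
  | 0 => []
  | n + 1 => G.step σmin σmax s (hist G σmin σmax s n)

/-- Price of the completed play determined by an initial configuration and a pair of
strategies: the price of the play if it reaches a final location, `+∞` otherwise. -/
def playCost (G : SPTG) (s : G.Conf) (σmin : MinStrategy G) (σmax : MaxStrategy G) :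
    EReal :=
  if h : ∃ n, G.isFin (G.endConf s (G.hist σmin σmax s n)).1 then
    ((G.finPrice s (G.hist σmin σmax s (Nat.find h)) : ℝ) : EReal)
  else ⊤

/-- Upper value. -/
def upperVal (G : SPTG) (s : G.Conf) : EReal :=
  ⨅ σmin : MinStrategy G, ⨆ σmax : MaxStrategy G, G.playCost s σmin σmax

/-- Lower value. -/
def lowerVal (G : SPTG) (s : G.Conf) : EReal :=
  ⨆ σmax : MaxStrategy G, ⨅ σmin : MinStrategy G, G.playCost s σmin σmax

/-- The value of the game (SPTGs are determined). -/
def val (G : SPTG) (ℓ : G.Loc) (ν : ℝ) : EReal := G.upperVal (ℓ, ν)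

/-- The finite play `(s, l)` is consistent with the Min strategy `σ`. -/
def consistentMin (G : SPTG) (σ : MinStrategy G) (s : G.Conf) (l : List G.Move) : Prop :=
  ∀ (l₁ : List G.Move) (m : G.Move) (l₂ : List G.Move), l = l₁ ++ m :: l₂ →
    G.isMin (G.endConf s l₁).1 → σ.move s l₁ = some m

/-- The finite play `(s, l)` is consistent with the Max strategy `σ`. -/
def consistentMax (G : SPTG) (σ : MaxStrategy G) (s : G.Conf) (l : List G.Move) : Prop :=
  ∀ (l₁ : List G.Move) (m : G.Move) (l₂ : List G.Move), l = l₁ ++ m :: l₂ →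
    G.isMax (G.endConf s l₁).1 → σ.move s l₁ = some m

/-- There is an infinite play from `s` consistent with the Min strategy `σ`. -/
def infConsMin (G : SPTG) (σ : MinStrategy G) (s : G.Conf) : Prop :=
  ∃ ρ : ℕ → G.Move, ∀ n : ℕ,
    G.ValidFrom s (List.ofFn fun i : Fin n => ρ i) ∧
    G.consistentMin σ s (List.ofFn fun i : Fin n => ρ i)

/-- `Cost(s, σ_Min)`: the supremum of the prices of the completed plays from `s`
consistent with `σ_Min` (finite completed plays end in a deadlock; they have price
`+∞` unless they end in a final location; infinite plays have price `+∞`). -/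
def minCost (G : SPTG) (σ : MinStrategy G) (s : G.Conf) : EReal :=
  (⨆ l : { l : List G.Move //
      G.ValidFrom s l ∧ G.consistentMin σ s l ∧ G.deadlock (G.endConf s l) },
    if G.isFin (G.endConf s l.1).1 then ((G.finPrice s l.1 : ℝ) : EReal) else ⊤) ⊔
  (if G.infConsMin σ s then (⊤ : EReal) else ⊥)

/-- `Cost(s, σ_Max)`: the infimum of the prices of the completed plays from `s`
consistent with `σ_Max`. -/
def maxCost (G : SPTG) (σ : MaxStrategy G) (s : G.Conf) : EReal :=
  ⨅ l : { l : List G.Move //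
      G.ValidFrom s l ∧ G.consistentMax σ s l ∧ G.deadlock (G.endConf s l) },
    if G.isFin (G.endConf s l.1).1 then ((G.finPrice s l.1 : ℝ) : EReal) else ⊤

/-- A finite positional (FP-)strategy: a memoryless strategy given by a function `f`
of the current configuration, together with, for each location, finitely many
rational endpoints `0 = ν_0 < ν_1 < ⋯ < ν_k = r` (all belonging to `pts`) such that
on each open interval and at each endpoint the strategy plays the same move, which is
either a fixed transition taken immediately or waiting until the next endpoint and
then taking a fixed transition. -/
structure FPStrategy (G : SPTG) where
  f : G.Conf → Option G.Move
  pts : Finset ℚ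
  zero_mem : (0 : ℚ) ∈ pts
  r_mem : ∃ q ∈ pts, (q : ℝ) = G.r
  pts_range : ∀ q ∈ pts, (0 : ℝ) ≤ (q : ℝ) ∧ (q : ℝ) ≤ G.r
  fp : ∀ ℓ : G.Loc, ∃ (k : ℕ) (ν : ℕ → ℚ) (δ : ℕ → G.Loc),
    (∀ i ≤ k, ν i ∈ pts) ∧ ν 0 = 0 ∧ ((ν k : ℝ) = G.r) ∧ (∀ i < k, ν i < ν (i + 1)) ∧
    (∀ i, 1 ≤ i → i ≤ k →
      (∀ x : ℝ, (ν (i - 1) : ℝ) < x → x < (ν i : ℝ) →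
        f (ℓ, x) = some ⟨0, δ (2 * i - 1)⟩) ∨
      (∀ x : ℝ, (ν (i - 1) : ℝ) < x → x < (ν i : ℝ) →
        f (ℓ, x) = some ⟨(ν i : ℝ) - x, δ (2 * i - 1)⟩)) ∧
    (∀ i < k, f (ℓ, (ν i : ℝ)) = some ⟨0, δ (2 * i)⟩ ∨
      f (ℓ, (ν i : ℝ)) = some ⟨(ν (i + 1) : ℝ) - (ν i : ℝ), δ (2 * i)⟩) ∧
    f (ℓ, (ν k : ℝ)) = some ⟨0, δ (2 * k)⟩

namespace FPStrategy

variable {G : SPTG}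

/-- `|σ| = |Int(σ)|`: the number of intervals (singletons and open intervals)
generated by the points of `σ`. -/
def size (σ : FPStrategy G) : ℕ := 2 * σ.pts.card - 1

/-- `σ` prescribes a legal move wherever Min has to play. -/
def legalMin (σ : FPStrategy G) : Prop :=
  ∀ s : G.Conf, G.validConf s → G.isMin s.1 → ¬G.deadlock s →
    ∃ m, σ.f s = some m ∧ G.canMove s m

/-- `σ` prescribes a legal move wherever Max has to play. -/
def legalMax (σ : FPStrategy G) : Prop :=
  ∀ s : G.Conf, G.validConf s → G.isMax s.1 → ¬G.deadlock s →
    ∃ m, σ.f s = some m ∧ G.canMove s m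

/-- The finite play `(s, l)` is consistent with `σ` viewed as a Min strategy. -/
def consMin (σ : FPStrategy G) (s : G.Conf) (l : List G.Move) : Prop :=
  ∀ (l₁ : List G.Move) (m : G.Move) (l₂ : List G.Move), l = l₁ ++ m :: l₂ →
    G.isMin (G.endConf s l₁).1 → σ.f (G.endConf s l₁) = some m

/-- The finite play `(s, l)` is consistent with `σ` viewed as a Max strategy. -/
def consMax (σ : FPStrategy G) (s : G.Conf) (l : List G.Move) : Prop :=
  ∀ (l₁ : List G.Move) (m : G.Move) (l₂ : List G.Move), l = l₁ ++ m :: l₂ →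
    G.isMax (G.endConf s l₁).1 → σ.f (G.endConf s l₁) = some m

/-- An NC-strategy of Min: an FP-strategy such that along every cycle consistent
with it whose endpoints have clock values in the same interval of `Int(σ)`, the sum
of the weights of the discrete transitions is at most `-1`. -/
def isNC (σ : FPStrategy G) : Prop :=
  σ.legalMin ∧
  ∀ (ℓ : G.Loc) (ν : ℝ) (l : List G.Move), l ≠ [] →
    G.ValidFrom (ℓ, ν) l → σ.consMin (ℓ, ν) l → (G.endConf (ℓ, ν) l).1 = ℓ →
    sameInt σ.pts ν (G.endConf (ℓ, ν) l).2 → G.transWtSum (ℓ, ν) l ≤ -1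

/-- The fake value of `σ` from `s`: the supremum of the prices of the plays from `s`
consistent with `σ` that reach a final location (`sup ∅ = -∞`). -/
def fakeVal (σ : FPStrategy G) (s : G.Conf) : EReal :=
  ⨆ l : { l : List G.Move //
      G.ValidFrom s l ∧ σ.consMin s l ∧ G.isFin (G.endConf s l).1 },
    ((G.finPrice s l.1 : ℝ) : EReal)

/-- `Cost(s, σ)` for `σ` viewed as a Max strategy. -/
def maxCost (σ : FPStrategy G) (s : G.Conf) : EReal :=
  ⨅ l : { l : List G.Move //
      G.ValidFrom s l ∧ σ.consMax s l ∧ G.deadlock (G.endConf s l) },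
    if G.isFin (G.endConf s l.1).1 then ((G.finPrice s l.1 : ℝ) : EReal) else ⊤

end FPStrategy

/-- `w_T`: the largest absolute value of a transition weight. -/
def wT (G : SPTG) : ℝ :=
  ⨆ p : G.Loc × G.Loc, if G.trans p.1 p.2 then |(G.transWt p.1 p.2 : ℝ)| else 0

/-- `w_L`: the largest absolute value of a (non-final) location weight. -/
def wL (G : SPTG) : ℝ :=
  ⨆ ℓ : G.Loc, if G.isFin ℓ then 0 else |(G.locWt ℓ : ℝ)|

/-- `w_F`: the largest absolute value of a final cost function on `[0,r]`. -/
def wF (G : SPTG) : ℝ :=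
  ⨆ ℓ : G.Loc, if G.isFin ℓ then max |G.finalCost ℓ 0| |G.finalCost ℓ G.r| else 0

/-- Slope of the value function of location `ℓ` between clock values `ν₁` and `ν₂`. -/
def slope (G : SPTG) (ℓ : G.Loc) (ν₁ ν₂ : ℝ) : ℝ :=
  ((G.val ℓ ν₂).toReal - (G.val ℓ ν₁).toReal) / (ν₂ - ν₁)

/-- A game is finitely optimal if Min has a fake-optimal NC-strategy, Max has an
optimal FP-strategy, and all value functions are cost functions. -/
def finitelyOptimal (G : SPTG) : Prop :=
  (∃ σ : FPStrategy G, σ.isNC ∧ ∀ s : G.Conf, G.validConf s → σ.fakeVal s = G.val s.1 s.2) ∧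
  (∃ σ : FPStrategy G, σ.legalMax ∧ ∀ s : G.Conf, G.validConf s → σ.maxCost s = G.val s.1 s.2) ∧
  ∀ ℓ : G.Loc, CostFunctionOn (G.val ℓ) 0 G.r

end SPTG


/-!
When every non-final location is urgent the clock never moves, so from clock value `ν` the game
is a turn-based game on the location graph in which a play reaching the final location `ℓ'` with
accumulated transition weight `k` costs `k + φ_ℓ'(ν)`. Its value is the limit of value iteration
started from `+∞`. The iterates take values in `{+∞} ∪ {k + φ_ℓ'(ν)}`, which has only finitely
many points in every bounded window, so a finite value is attained by some iterate; playing that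
iterate against Max's positional strategy, greedy for the limit, gives an optimal play. If the
play visits a location twice, cutting out or repeating the cycle gives plays that are still
consistent with Max's strategy, hence cost at least the value: the cycle has weight `0` and can
be cut. An optimal play without repeated locations has fewer than `|L|` transitions.
-/

def EReal.addOrderIso (w : ℝ) : EReal ≃o EReal where
  toFun x := w + x
  invFun x := x - w
  left_inv _ := EReal.add_sub_cancel_left
  right_inv x := by
    change (w : EReal) + (x - w) = x
    rw [add_comm]
    exact EReal.sub_add_cancel
  map_rel_iff' := (EReal.addLECancellable_coe w).add_le_add_iff_left

theorem EReal.coe_add_iInf {ι : Sort*} (w : ℝ) (f : ι → EReal) :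
    (w : EReal) + ⨅ i, f i = ⨅ i, (w + f i) :=
  (EReal.addOrderIso w).map_iInf f

theorem exists_eq_iInf_of_finite_range_inter_Iio {ι α : Type*} [CompleteLinearOrder α]
    (u : ι → α) {b : α} (hb : ⨅ i, u i < b) (hfin : (Set.range u ∩ Set.Iio b).Finite) :
    ∃ i, u i = ⨅ i, u i := by
  obtain ⟨i₀, hi₀⟩ := iInf_lt_iff.mp hb
  obtain ⟨_, ⟨⟨i, rfl⟩, hib⟩, hmin⟩ :=
    Set.exists_min_image _ id hfin ⟨u i₀, ⟨i₀, rfl⟩, hi₀⟩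
  refine ⟨i, le_antisymm (le_iInf fun j => ?_) (iInf_le u i)⟩
  by_cases hj : u j < b
  · exact hmin (u j) ⟨⟨j, rfl⟩, hj⟩
  · exact (hib.trans_le (not_lt.mp hj)).le

namespace SPTG

variable {G : SPTG}

theorem not_isMax_of_isMin {ℓ : G.Loc} (h : G.isMin ℓ) : ¬G.isMax ℓ := by
  rcases G.partition ℓ with h' | h' | h' <;> tauto

theorem isMax_of_not_isMin {ℓ : G.Loc} (hf : ¬G.isFin ℓ) (hm : ¬G.isMin ℓ) : G.isMax ℓ := by
  rcases G.partition ℓ with h' | h' | h' <;> tauto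

theorem endConf_cons (s : G.Conf) (m : G.Move) (l : List G.Move) :
    G.endConf s (m :: l) = G.endConf (G.applyMove s m) l := rfl

theorem endConf_append (s : G.Conf) (x y : List G.Move) :
    G.endConf s (x ++ y) = G.endConf (G.endConf s x) y := List.foldl_append

theorem validFrom_append (s : G.Conf) (x y : List G.Move) :
    G.ValidFrom s (x ++ y) ↔ G.ValidFrom s x ∧ G.ValidFrom (G.endConf s x) y := by
  induction x generalizing s with
  | nil => simp [ValidFrom, endConf]
  | cons m x ih => simp only [List.cons_append, ValidFrom, endConf_cons, ih, and_assoc]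

theorem transWtSum_append (s : G.Conf) (x y : List G.Move) :
    G.transWtSum s (x ++ y) = G.transWtSum s x + G.transWtSum (G.endConf s x) y := by
  induction x generalizing s with
  | nil => simp [transWtSum, endConf]
  | cons m x ih =>
    simp only [List.cons_append, transWtSum, endConf_cons, ih]
    ring

theorem endConf_clock_le {s : G.Conf} {l : List G.Move} (hs : s.2 ≤ G.r)
    (hl : G.ValidFrom s l) : (G.endConf s l).2 ≤ G.r := by
  induction l generalizing s with
  | nil => exact hs
  | cons m l ih => exact ih hl.1.2.1 hl.2

theorem deadlock_of_isFin {s : G.Conf} (h : G.isFin s.1) : G.deadlock s :=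
  fun ⟨_, hm⟩ => G.trans_not_fin _ _ hm.2.2.1 h

variable (G) in
def successors (ℓ : G.Loc) : Finset G.Loc := {ℓ' | G.trans ℓ ℓ'}

@[simp]
theorem mem_successors {ℓ ℓ' : G.Loc} : ℓ' ∈ G.successors ℓ ↔ G.trans ℓ ℓ' := by
  simp [successors]

theorem canMove_stay {s : G.Conf} {ℓ' : G.Loc} (hs : s.2 ≤ G.r) (h : G.trans s.1 ℓ') :
    G.canMove s ⟨0, ℓ'⟩ :=
  ⟨le_rfl, by simpa using hs, h, fun _ => rfl⟩

theorem not_deadlock_iff {s : G.Conf} (hs : s.2 ≤ G.r) :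
    ¬G.deadlock s ↔ (G.successors s.1).Nonempty := by
  refine ⟨fun h => ?_, fun ⟨ℓ', hℓ'⟩ hd => hd ⟨_, canMove_stay hs (mem_successors.mp hℓ')⟩⟩
  obtain ⟨m, hm⟩ := not_not.mp h
  exact ⟨m.tgt, mem_successors.mpr hm.2.2.1⟩

theorem step_of_deadlock (σ : G.MinStrategy) (τ : G.MaxStrategy) {s : G.Conf}
    {l : List G.Move} (h : G.deadlock (G.endConf s l)) : G.step σ τ s l = l :=
  if_pos h

theorem exists_step_eq_append (σ : G.MinStrategy) (τ : G.MaxStrategy) {s : G.Conf}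
    {l : List G.Move} (hs : G.validConf s) (hl : G.ValidFrom s l)
    (hd : ¬G.deadlock (G.endConf s l)) :
    ∃ m, G.step σ τ s l = l ++ [m] ∧ G.canMove (G.endConf s l) m ∧
      (G.isMin (G.endConf s l).1 → σ.move s l = some m) ∧
      (G.isMax (G.endConf s l).1 → τ.move s l = some m) := by
  by_cases hmin : G.isMin (G.endConf s l).1
  · obtain ⟨m, hm, hcan⟩ := σ.legal s l hs hl hmin hd
    refine ⟨m, ?_, hcan, fun _ => hm, fun hmax => absurd hmax (not_isMax_of_isMin hmin)⟩
    simp only [step, if_neg hd, if_pos hmin, hm]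
  · have hmax := isMax_of_not_isMin (fun hf => hd (deadlock_of_isFin hf)) hmin
    obtain ⟨m, hm, hcan⟩ := τ.legal s l hs hl hmax hd
    refine ⟨m, ?_, hcan, fun h => absurd h hmin, fun _ => hm⟩
    simp only [step, if_neg hd, if_neg hmin, hm]

theorem validFrom_hist (σ : G.MinStrategy) (τ : G.MaxStrategy) {s : G.Conf}
    (hs : G.validConf s) (n : ℕ) : G.ValidFrom s (G.hist σ τ s n) := by
  induction n with
  | zero => trivial
  | succ n ih =>
    change G.ValidFrom s (G.step σ τ s _)
    by_cases hd : G.deadlock (G.endConf s (G.hist σ τ s n))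
    · rwa [step_of_deadlock σ τ hd]
    · obtain ⟨m, hstep, hcan, -⟩ := exists_step_eq_append σ τ hs ih hd
      rw [hstep, validFrom_append]
      exact ⟨ih, hcan, trivial⟩


variable (G) in
def discretePrice (ν : ℝ) (s : G.Conf) (l : List G.Move) : ℝ :=
  G.transWtSum s l + G.finalCost (G.endConf s l).1 ν

theorem discretePrice_cons (ν : ℝ) (s : G.Conf) (m : G.Move) (l : List G.Move) :
    G.discretePrice ν s (m :: l) =
      G.transWt s.1 m.tgt + G.discretePrice ν (G.applyMove s m) l := by
  simp only [discretePrice, transWtSum, endConf_cons]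
  push_cast
  ring

variable (G) in
def AllUrgent : Prop := ∀ ℓ : G.Loc, ¬G.isFin ℓ → G.isUrg ℓ

namespace AllUrgent

theorem delay_eq_zero (hurg : G.AllUrgent) {s : G.Conf} {m : G.Move} (h : G.canMove s m) :
    m.t = 0 :=
  h.2.2.2 (hurg _ (G.trans_not_fin _ _ h.2.2.1))

theorem endConf_clock (hurg : G.AllUrgent) {s : G.Conf} {l : List G.Move}
    (hl : G.ValidFrom s l) : (G.endConf s l).2 = s.2 := by
  induction l generalizing s with
  | nil => rfl
  | cons m l ih =>
    rw [endConf_cons, ih hl.2]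
    change s.2 + m.t = s.2
    rw [hurg.delay_eq_zero hl.1, add_zero]

theorem finPrice_eq (hurg : G.AllUrgent) {s : G.Conf} {l : List G.Move}
    (hl : G.ValidFrom s l) (hfin : G.isFin (G.endConf s l).1) :
    G.finPrice s l = G.discretePrice s.2 s l := by
  induction l generalizing s with
  | nil => simp [finPrice, discretePrice, transWtSum, endConf, show G.isFin s.1 from hfin]
  | cons m l ih =>
    have hclock : (G.applyMove s m).2 = s.2 := by
      simp [applyMove, hurg.delay_eq_zero hl.1]
    rw [finPrice, ih hl.2 hfin, hclock, discretePrice_cons, moveCost,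
      hurg.delay_eq_zero hl.1, zero_mul, add_zero]

theorem playCost_le (hurg : G.AllUrgent) (σ : G.MinStrategy) (τ : G.MaxStrategy)
    {s : G.Conf} (hs : G.validConf s) {x : EReal}
    (hex : ∃ n, G.isFin (G.endConf s (G.hist σ τ s n)).1)
    (h : ∀ n, G.isFin (G.endConf s (G.hist σ τ s n)).1 →
      (G.discretePrice s.2 s (G.hist σ τ s n) : EReal) ≤ x) :
    G.playCost s σ τ ≤ x := by
  rw [playCost, dif_pos hex, hurg.finPrice_eq (validFrom_hist σ τ hs _) (Nat.find_spec hex)]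
  exact h _ (Nat.find_spec hex)

theorem le_playCost (hurg : G.AllUrgent) (σ : G.MinStrategy) (τ : G.MaxStrategy)
    {s : G.Conf} (hs : G.validConf s) {x : EReal}
    (h : ∀ n, G.isFin (G.endConf s (G.hist σ τ s n)).1 →
      x ≤ (G.discretePrice s.2 s (G.hist σ τ s n) : EReal)) :
    x ≤ G.playCost s σ τ := by
  rw [playCost]
  split_ifs with hex
  · rw [hurg.finPrice_eq (validFrom_hist σ τ hs _) (Nat.find_spec hex)]
    exact h _ (Nat.find_spec hex)
  · exact le_top

end AllUrgent

variable (G) in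
def bellman (ν : ℝ) (f : G.Loc → EReal) (ℓ : G.Loc) : EReal :=
  if G.isFin ℓ then (G.finalCost ℓ ν : EReal)
  else if h : (G.successors ℓ).Nonempty then
    if G.isMin ℓ then (G.successors ℓ).inf' h fun ℓ' => ((G.transWt ℓ ℓ' : ℝ) : EReal) + f ℓ'
    else (G.successors ℓ).sup' h fun ℓ' => ((G.transWt ℓ ℓ' : ℝ) : EReal) + f ℓ'
  else ⊤

variable (G) in
/-- The value of the game in which Min must reach a final location within `m` steps. -/
def iterVal (ν : ℝ) : ℕ → G.Loc → EReal
  | 0 => fun ℓ => if G.isFin ℓ then (G.finalCost ℓ ν : EReal) else ⊤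
  | m + 1 => G.bellman ν (iterVal ν m)

variable (G) in
def limVal (ν : ℝ) (ℓ : G.Loc) : EReal := ⨅ m, G.iterVal ν m ℓ

section ValueIteration

variable {ν : ℝ} {ℓ : G.Loc}

theorem iterVal_of_isFin (m : ℕ) (h : G.isFin ℓ) : G.iterVal ν m ℓ = G.finalCost ℓ ν := by
  cases m <;> simp [iterVal, bellman, h]

theorem iterVal_zero_of_not_isFin (h : ¬G.isFin ℓ) : G.iterVal ν 0 ℓ = ⊤ := by
  simp [iterVal, h]

theorem iterVal_succ_of_isMin (hf : ¬G.isFin ℓ) (hmin : G.isMin ℓ) (m : ℕ)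
    (h : (G.successors ℓ).Nonempty) :
    G.iterVal ν (m + 1) ℓ =
      (G.successors ℓ).inf' h fun ℓ' => ((G.transWt ℓ ℓ' : ℝ) : EReal) + G.iterVal ν m ℓ' := by
  simp [iterVal, bellman, hf, hmin, h]

theorem iterVal_succ_of_not_isMin (hf : ¬G.isFin ℓ) (hmin : ¬G.isMin ℓ) (m : ℕ)
    (h : (G.successors ℓ).Nonempty) :
    G.iterVal ν (m + 1) ℓ =
      (G.successors ℓ).sup' h fun ℓ' => ((G.transWt ℓ ℓ' : ℝ) : EReal) + G.iterVal ν m ℓ' := by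
  simp [iterVal, bellman, hf, hmin, h]

theorem iterVal_succ_of_not_nonempty (hf : ¬G.isFin ℓ) (m : ℕ)
    (h : ¬(G.successors ℓ).Nonempty) : G.iterVal ν (m + 1) ℓ = ⊤ := by
  simp [iterVal, bellman, hf, h]

theorem successors_nonempty_of_iterVal_ne_top {m : ℕ} (hf : ¬G.isFin ℓ)
    (h : G.iterVal ν m ℓ ≠ ⊤) : (G.successors ℓ).Nonempty := by
  cases m with
  | zero => exact absurd (iterVal_zero_of_not_isFin hf) h
  | succ m => exact not_not.mp fun hne => h (iterVal_succ_of_not_nonempty hf m hne)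

theorem bellman_mono {f g : G.Loc → EReal} (h : f ≤ g) : G.bellman ν f ≤ G.bellman ν g := by
  intro ℓ
  unfold bellman
  split_ifs
  · exact le_rfl
  · exact Finset.inf'_mono_fun fun ℓ' _ => add_le_add_right (h ℓ') _
  · exact Finset.sup'_mono_fun fun ℓ' _ => add_le_add_right (h ℓ') _
  · exact le_rfl

theorem antitone_iterVal (ℓ : G.Loc) : Antitone fun m => G.iterVal ν m ℓ := by
  suffices h : ∀ m, G.iterVal ν (m + 1) ≤ G.iterVal ν m from
    antitone_nat_of_succ_le fun m => h m ℓ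
  intro m
  induction m with
  | zero =>
    intro ℓ
    by_cases hf : G.isFin ℓ
    · rw [iterVal_of_isFin _ hf, iterVal_of_isFin _ hf]
    · rw [iterVal_zero_of_not_isFin hf]
      exact le_top
  | succ m ih => exact bellman_mono ih

theorem limVal_of_isFin (h : G.isFin ℓ) : G.limVal ν ℓ = G.finalCost ℓ ν := by
  simp [limVal, iterVal_of_isFin _ h]

theorem limVal_le_of_isMin (hf : ¬G.isFin ℓ) (hmin : G.isMin ℓ) {ℓ' : G.Loc}
    (h : G.trans ℓ ℓ') : G.limVal ν ℓ ≤ ((G.transWt ℓ ℓ' : ℝ) : EReal) + G.limVal ν ℓ' := by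
  simp only [limVal, EReal.coe_add_iInf]
  refine le_iInf fun m => (iInf_le _ (m + 1)).trans ?_
  rw [iterVal_succ_of_isMin hf hmin m ⟨ℓ', mem_successors.mpr h⟩]
  exact Finset.inf'_le _ (mem_successors.mpr h)

theorem limVal_le_sup' (hf : ¬G.isFin ℓ) (hmin : ¬G.isMin ℓ) (h : (G.successors ℓ).Nonempty) :
    G.limVal ν ℓ ≤
      (G.successors ℓ).sup' h fun ℓ' => ((G.transWt ℓ ℓ' : ℝ) : EReal) + G.limVal ν ℓ' := by
  have hswap := (G.successors ℓ).finite_toSet.iInf_biSup_of_antitone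
    (f := fun ℓ' m => ((G.transWt ℓ ℓ' : ℝ) : EReal) + G.iterVal ν m ℓ')
    fun ℓ' _ _ _ hm => add_le_add_right (antitone_iterVal ℓ' hm) _
  simp only [Finset.sup'_eq_sup, Finset.sup_eq_iSup, limVal, EReal.coe_add_iInf]
  simp only [Finset.mem_coe] at hswap
  rw [← hswap]
  refine le_iInf fun m => (iInf_le _ (m + 1)).trans_eq ?_
  rw [iterVal_succ_of_not_isMin hf hmin m h, Finset.sup'_eq_sup, Finset.sup_eq_iSup]

end ValueIteration

variable (G) in
def minMove (ν : ℝ) (k : ℕ) (ℓ : G.Loc) (h : (G.successors ℓ).Nonempty) : G.Loc :=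
  (Finset.exists_mem_eq_inf' h fun ℓ' => ((G.transWt ℓ ℓ' : ℝ) : EReal) + G.iterVal ν k ℓ').choose

variable (G) in
def maxMove (ν : ℝ) (ℓ : G.Loc) (h : (G.successors ℓ).Nonempty) : G.Loc :=
  (Finset.exists_mem_eq_sup' h fun ℓ' => ((G.transWt ℓ ℓ' : ℝ) : EReal) + G.limVal ν ℓ').choose

section OptimalMoves

variable {ν : ℝ} {ℓ : G.Loc}

theorem minMove_mem (k : ℕ) (h : (G.successors ℓ).Nonempty) :
    G.minMove ν k ℓ h ∈ G.successors ℓ :=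
  (Finset.exists_mem_eq_inf' h _).choose_spec.1

theorem iterVal_succ_eq_minMove (hf : ¬G.isFin ℓ) (hmin : G.isMin ℓ) (k : ℕ)
    (h : (G.successors ℓ).Nonempty) :
    G.iterVal ν (k + 1) ℓ =
      ((G.transWt ℓ (G.minMove ν k ℓ h) : ℝ) : EReal) + G.iterVal ν k (G.minMove ν k ℓ h) := by
  rw [iterVal_succ_of_isMin hf hmin k h]
  exact (Finset.exists_mem_eq_inf' h _).choose_spec.2

theorem maxMove_mem (h : (G.successors ℓ).Nonempty) : G.maxMove ν ℓ h ∈ G.successors ℓ :=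
  (Finset.exists_mem_eq_sup' h _).choose_spec.1

theorem limVal_le_maxMove (hf : ¬G.isFin ℓ) (hmin : ¬G.isMin ℓ)
    (h : (G.successors ℓ).Nonempty) :
    G.limVal ν ℓ ≤ ((G.transWt ℓ (G.maxMove ν ℓ h) : ℝ) : EReal) + G.limVal ν (G.maxMove ν ℓ h) :=
  (limVal_le_sup' hf hmin h).trans_eq (Finset.exists_mem_eq_sup' h _).choose_spec.2

theorem add_iterVal_le_iterVal_succ (hf : ¬G.isFin ℓ) (hmin : ¬G.isMin ℓ) {ℓ' : G.Loc}
    (h : G.trans ℓ ℓ') (k : ℕ) :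
    ((G.transWt ℓ ℓ' : ℝ) : EReal) + G.iterVal ν k ℓ' ≤ G.iterVal ν (k + 1) ℓ := by
  rw [iterVal_succ_of_not_isMin hf hmin k ⟨ℓ', mem_successors.mpr h⟩]
  exact Finset.le_sup' (fun ℓ' => ((G.transWt ℓ ℓ' : ℝ) : EReal) + G.iterVal ν k ℓ')
    (mem_successors.mpr h)

end OptimalMoves

variable (G) in
def maxChoice (ν : ℝ) (s : G.Conf) : Option G.Move :=
  if h : (G.successors s.1).Nonempty then some ⟨0, G.maxMove ν s.1 h⟩ else none

variable (G) in
def maxStrategy (ν : ℝ) : G.MaxStrategy where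
  move s l := G.maxChoice ν (G.endConf s l)
  legal s l hs hl _ hd := by
    have hr := endConf_clock_le hs.2 hl
    have hne := (not_deadlock_iff hr).mp hd
    exact ⟨_, dif_pos hne, canMove_stay hr (mem_successors.mp (maxMove_mem hne))⟩

variable (G) in
/-- Min's strategy that, after `n` moves, plays optimally for `iterVal ν (M - (n + 1))`. -/
def minStrategy (ν : ℝ) (M : ℕ) : G.MinStrategy where
  move s l :=
    if h : (G.successors (G.endConf s l).1).Nonempty then
      some ⟨0, G.minMove ν (M - (l.length + 1)) _ h⟩
    else none
  legal s l hs hl _ hd := by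
    have hr := endConf_clock_le hs.2 hl
    have hne := (not_deadlock_iff hr).mp hd
    exact ⟨_, dif_pos hne, canMove_stay hr (mem_successors.mp (minMove_mem _ hne))⟩

variable (G) in
def followsAtMax (f : G.Conf → Option G.Move) : G.Conf → List G.Move → Prop
  | _, [] => True
  | s, m :: l => (G.isMax s.1 → f s = some m) ∧ followsAtMax f (G.applyMove s m) l

theorem followsAtMax_append {f : G.Conf → Option G.Move} (s : G.Conf) (x y : List G.Move) :
    G.followsAtMax f s (x ++ y) ↔ G.followsAtMax f s x ∧ G.followsAtMax f (G.endConf s x) y := by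
  induction x generalizing s with
  | nil => simp [followsAtMax, endConf]
  | cons m x ih => simp only [List.cons_append, followsAtMax, endConf_cons, ih, and_assoc]

theorem followsAtMax_hist {ν : ℝ} (σ : G.MinStrategy) {s : G.Conf} (hs : G.validConf s)
    (n : ℕ) : G.followsAtMax (G.maxChoice ν) s (G.hist σ (G.maxStrategy ν) s n) := by
  induction n with
  | zero => trivial
  | succ n ih =>
    change G.followsAtMax _ s (G.step σ _ s _)
    by_cases hd : G.deadlock (G.endConf s (G.hist σ (G.maxStrategy ν) s n))
    · rwa [step_of_deadlock σ _ hd]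
    · obtain ⟨m, hstep, -, -, hmax⟩ := exists_step_eq_append σ _ hs (validFrom_hist σ _ hs n) hd
      rw [hstep, followsAtMax_append]
      exact ⟨ih, hmax, trivial⟩

theorem limVal_le_discretePrice {ν : ℝ} {s : G.Conf} {l : List G.Move} (hl : G.ValidFrom s l)
    (hmax : G.followsAtMax (G.maxChoice ν) s l) (hfin : G.isFin (G.endConf s l).1) :
    G.limVal ν s.1 ≤ G.discretePrice ν s l := by
  induction l generalizing s with
  | nil => simp [limVal_of_isFin (show G.isFin s.1 from hfin), discretePrice, transWtSum, endConf]
  | cons m l ih =>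
    have htr : G.trans s.1 m.tgt := hl.1.2.2.1
    have hf : ¬G.isFin s.1 := G.trans_not_fin _ _ htr
    have hstep : G.limVal ν s.1 ≤ ((G.transWt s.1 m.tgt : ℝ) : EReal) + G.limVal ν m.tgt := by
      by_cases hmin : G.isMin s.1
      · exact limVal_le_of_isMin hf hmin htr
      · have hne : (G.successors s.1).Nonempty := ⟨_, mem_successors.mpr htr⟩
        have hm := hmax.1 (isMax_of_not_isMin hf hmin)
        rw [maxChoice, dif_pos hne, Option.some_inj] at hm
        rw [← hm]
        exact limVal_le_maxMove hf hmin hne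
    rw [discretePrice_cons, EReal.coe_add]
    exact hstep.trans (add_le_add_right (ih hl.2 hmax.2 hfin) _)

variable (G) in
def minPotential (ν : ℝ) (M : ℕ) (s : G.Conf) (l : List G.Move) : EReal :=
  ((G.transWtSum s l : ℝ) : EReal) + G.iterVal ν (M - l.length) (G.endConf s l).1

section MinStrategy

variable {ν : ℝ} {M : ℕ} (τ : G.MaxStrategy) {s : G.Conf}

theorem minPotential_step_le {l : List G.Move} (hs : G.validConf s) (hl : G.ValidFrom s l) :
    G.minPotential ν M s (G.step (G.minStrategy ν M) τ s l) ≤ G.minPotential ν M s l := by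
  by_cases hd : G.deadlock (G.endConf s l)
  · rw [step_of_deadlock _ τ hd]
  obtain ⟨m, hstep, hcan, hmin, -⟩ := exists_step_eq_append (G.minStrategy ν M) τ hs hl hd
  have hf : ¬G.isFin (G.endConf s l).1 := fun h => hd (deadlock_of_isFin h)
  have htr : G.trans (G.endConf s l).1 m.tgt := hcan.2.2.1
  rw [hstep, minPotential, minPotential, transWtSum_append, endConf_append, List.length_append]
  cases hk : M - l.length with
  | zero =>
    rw [iterVal_zero_of_not_isFin hf, EReal.add_top_of_ne_bot (EReal.coe_ne_bot _)]
    exact le_top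
  | succ k =>
    have hk1 : M - (l.length + 1) = k := by omega
    have key : ((G.transWt (G.endConf s l).1 m.tgt : ℝ) : EReal) + G.iterVal ν k m.tgt ≤
        G.iterVal ν (k + 1) (G.endConf s l).1 := by
      by_cases hmin' : G.isMin (G.endConf s l).1
      · have hne : (G.successors (G.endConf s l).1).Nonempty := ⟨_, mem_successors.mpr htr⟩
        have hm : (⟨0, G.minMove ν (M - (l.length + 1)) _ hne⟩ : G.Move) = m :=
          Option.some_inj.mp ((dif_pos hne).symm.trans (hmin hmin'))
        rw [hk1] at hm
        rw [iterVal_succ_eq_minMove hf hmin' k hne, ← hm]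
      · exact add_iterVal_le_iterVal_succ hf hmin' htr k
    rw [List.length_singleton, hk1]
    simp only [transWtSum, add_zero, Int.cast_add, EReal.coe_add, add_assoc]
    exact add_le_add_right key _

theorem minPotential_hist_le (hs : G.validConf s) (n : ℕ) :
    G.minPotential ν M s (G.hist (G.minStrategy ν M) τ s n) ≤ G.iterVal ν M s.1 := by
  induction n with
  | zero => simp [minPotential, hist, transWtSum, endConf]
  | succ n ih => exact (minPotential_step_le τ hs (validFrom_hist _ τ hs n)).trans ih

theorem isFin_minStrategy_hist (hs : G.validConf s) (hM : G.iterVal ν M s.1 ≠ ⊤) :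
    G.isFin (G.endConf s (G.hist (G.minStrategy ν M) τ s M)).1 := by
  have hbound n : G.iterVal ν (M - (G.hist (G.minStrategy ν M) τ s n).length)
      (G.endConf s (G.hist (G.minStrategy ν M) τ s n)).1 ≠ ⊤ := fun htop => hM <| top_le_iff.mp <|
    (minPotential_hist_le τ hs n).trans' <| by
      rw [minPotential, htop, EReal.add_top_of_ne_bot (EReal.coe_ne_bot _)]
  have hlen n : G.isFin (G.endConf s (G.hist (G.minStrategy ν M) τ s n)).1 ∨
      (G.hist (G.minStrategy ν M) τ s n).length = n := by
    induction n with
    | zero => exact Or.inr rfl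
    | succ n ih =>
      change _ ∨ (G.step _ τ s _).length = _
      by_cases hf : G.isFin (G.endConf s (G.hist (G.minStrategy ν M) τ s n)).1
      · left
        change G.isFin (G.endConf s (G.step _ τ s _)).1
        rwa [step_of_deadlock _ τ (deadlock_of_isFin hf)]
      have hr := endConf_clock_le hs.2 (validFrom_hist (G.minStrategy ν M) τ hs n)
      have hd := (not_deadlock_iff hr).mpr (successors_nonempty_of_iterVal_ne_top hf (hbound n))
      obtain ⟨m, hstep, -⟩ := exists_step_eq_append _ τ hs (validFrom_hist _ τ hs n) hd
      rw [hstep, List.length_append, ih.resolve_left hf, List.length_singleton]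
      exact Or.inr rfl
  by_contra hf
  exact hbound M (by rw [(hlen M).resolve_left hf, Nat.sub_self, iterVal_zero_of_not_isFin hf])

theorem discretePrice_minStrategy_hist_le (hs : G.validConf s) (n : ℕ)
    (hfin : G.isFin (G.endConf s (G.hist (G.minStrategy ν M) τ s n)).1) :
    (G.discretePrice ν s (G.hist (G.minStrategy ν M) τ s n) : EReal) ≤ G.iterVal ν M s.1 := by
  have h := minPotential_hist_le (ν := ν) (M := M) τ hs n
  rwa [minPotential, iterVal_of_isFin _ hfin, ← EReal.coe_add] at h

end MinStrategy

theorem AllUrgent.val_eq_limVal (hurg : G.AllUrgent) {ℓ : G.Loc} {ν : ℝ}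
    (hs : G.validConf (ℓ, ν)) : G.val ℓ ν = G.limVal ν ℓ := by
  apply le_antisymm
  · refine le_iInf fun M => ?_
    by_cases hM : G.iterVal ν M ℓ = ⊤
    · rw [hM]
      exact le_top
    refine iInf_le_of_le (G.minStrategy ν M) (iSup_le fun τ => ?_)
    exact hurg.playCost_le _ τ hs ⟨M, isFin_minStrategy_hist τ hs hM⟩
      (discretePrice_minStrategy_hist_le τ hs)
  · refine le_iInf fun σ => le_iSup_of_le (G.maxStrategy ν) ?_
    exact hurg.le_playCost σ _ hs fun n hn =>
      limVal_le_discretePrice (validFrom_hist σ _ hs n) (followsAtMax_hist σ hs n) hn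

variable (G) in
def shiftedFinalCosts (ν : ℝ) : Set EReal :=
  insert ⊤ {x | ∃ (k : ℤ) (ℓ' : G.Loc), G.isFin ℓ' ∧ x = ((k + G.finalCost ℓ' ν : ℝ) : EReal)}

section Discreteness

variable {ν : ℝ}

theorem coe_add_mem_shiftedFinalCosts (k : ℤ) {x : EReal} (hx : x ∈ G.shiftedFinalCosts ν) :
    ((k : ℝ) : EReal) + x ∈ G.shiftedFinalCosts ν := by
  rcases hx with rfl | ⟨k', ℓ', hf, rfl⟩
  · exact Or.inl (EReal.add_top_of_ne_bot (EReal.coe_ne_bot _))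
  · refine Or.inr ⟨k + k', ℓ', hf, ?_⟩
    rw [← EReal.coe_add, Int.cast_add, add_assoc]

theorem iterVal_mem_shiftedFinalCosts (m : ℕ) (ℓ : G.Loc) :
    G.iterVal ν m ℓ ∈ G.shiftedFinalCosts ν := by
  by_cases hf : G.isFin ℓ
  · rw [iterVal_of_isFin m hf]
    exact Or.inr ⟨0, ℓ, hf, by simp⟩
  induction m generalizing ℓ with
  | zero => rw [iterVal_zero_of_not_isFin hf]; exact Or.inl rfl
  | succ m ih =>
    by_cases hne : (G.successors ℓ).Nonempty
    · have hmem ℓ' : ((G.transWt ℓ ℓ' : ℝ) : EReal) + G.iterVal ν m ℓ' ∈ G.shiftedFinalCosts ν := by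
        by_cases hf' : G.isFin ℓ'
        · rw [iterVal_of_isFin m hf']
          exact coe_add_mem_shiftedFinalCosts _ (Or.inr ⟨0, ℓ', hf', by simp⟩)
        · exact coe_add_mem_shiftedFinalCosts _ (ih ℓ' hf')
      by_cases hmin : G.isMin ℓ
      · obtain ⟨ℓ', -, heq⟩ := Finset.exists_mem_eq_inf' hne
          fun ℓ' => ((G.transWt ℓ ℓ' : ℝ) : EReal) + G.iterVal ν m ℓ'
        rw [iterVal_succ_of_isMin hf hmin m hne, heq]
        exact hmem ℓ'
      · obtain ⟨ℓ', -, heq⟩ := Finset.exists_mem_eq_sup' hne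
          fun ℓ' => ((G.transWt ℓ ℓ' : ℝ) : EReal) + G.iterVal ν m ℓ'
        rw [iterVal_succ_of_not_isMin hf hmin m hne, heq]
        exact hmem ℓ'
    · rw [iterVal_succ_of_not_nonempty hf m hne]
      exact Or.inl rfl

theorem finite_shiftedFinalCosts_inter_Ico (v : ℝ) :
    (G.shiftedFinalCosts ν ∩ Set.Ico (v : EReal) ((v + 1 : ℝ) : EReal)).Finite := by
  refine (Set.finite_range fun ℓ' : G.Loc =>
    (((⌈v - G.finalCost ℓ' ν⌉ : ℤ) + G.finalCost ℓ' ν : ℝ) : EReal)).subset ?_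
  rintro _ ⟨rfl | ⟨k, ℓ', -, rfl⟩, hlo, hhi⟩
  · exact absurd hhi not_top_lt
  · have hlo' : v ≤ k + G.finalCost ℓ' ν := EReal.coe_le_coe_iff.mp hlo
    have hhi' : k + G.finalCost ℓ' ν < v + 1 := EReal.coe_lt_coe_iff.mp hhi
    have hk : ⌈v - G.finalCost ℓ' ν⌉ = k := by
      rw [Int.ceil_eq_iff]
      constructor <;> linarith
    exact ⟨ℓ', by simp only [hk]⟩

theorem exists_iterVal_eq_limVal {ℓ : G.Loc} {v : ℝ} (hV : G.limVal ν ℓ = v) :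
    ∃ M, G.iterVal ν M ℓ = v := by
  have hsub : Set.range (fun m => G.iterVal ν m ℓ) ∩ Set.Iio ((v + 1 : ℝ) : EReal) ⊆
      G.shiftedFinalCosts ν ∩ Set.Ico (v : EReal) ((v + 1 : ℝ) : EReal) := by
    rintro _ ⟨⟨m, rfl⟩, hlt⟩
    exact ⟨iterVal_mem_shiftedFinalCosts m ℓ, hV ▸ iInf_le _ m, hlt⟩
  obtain ⟨M, hM⟩ := exists_eq_iInf_of_finite_range_inter_Iio (fun m => G.iterVal ν m ℓ)
    (by rw [← limVal, hV]; exact_mod_cast lt_add_one v)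
    ((finite_shiftedFinalCosts_inter_Ico v).subset hsub)
  exact ⟨M, hM.trans hV⟩

end Discreteness

variable (G) in
def IsFinalMaxPlay (ν : ℝ) (s : G.Conf) (l : List G.Move) : Prop :=
  G.ValidFrom s l ∧ G.followsAtMax (G.maxChoice ν) s l ∧ G.isFin (G.endConf s l).1

theorem IsFinalMaxPlay.limVal_le {ν : ℝ} {s : G.Conf} {l : List G.Move}
    (h : G.IsFinalMaxPlay ν s l) : G.limVal ν s.1 ≤ G.discretePrice ν s l :=
  limVal_le_discretePrice h.1 h.2.1 h.2.2

theorem exists_isFinalMaxPlay_discretePrice_eq {ℓ : G.Loc} {ν v : ℝ} (hs : G.validConf (ℓ, ν))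
    (hV : G.limVal ν ℓ = v) :
    ∃ l, G.IsFinalMaxPlay ν (ℓ, ν) l ∧ G.discretePrice ν (ℓ, ν) l = v := by
  obtain ⟨M, hM⟩ := exists_iterVal_eq_limVal hV
  have hM' : G.iterVal ν M ℓ ≠ ⊤ := hM ▸ EReal.coe_ne_top v
  have hl : G.IsFinalMaxPlay ν (ℓ, ν) (G.hist (G.minStrategy ν M) (G.maxStrategy ν) (ℓ, ν) M) :=
    ⟨validFrom_hist _ _ hs M, followsAtMax_hist _ hs M, isFin_minStrategy_hist _ hs hM'⟩
  refine ⟨_, hl, le_antisymm ?_ ?_⟩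
  · exact_mod_cast (discretePrice_minStrategy_hist_le _ hs M hl.2.2).trans hM.le
  · exact_mod_cast hV ▸ hl.limVal_le

theorem exists_cycle_of_card_le_length (s : G.Conf) {l : List G.Move}
    (h : Fintype.card G.Loc ≤ l.length) :
    ∃ a b d, l = a ++ b ++ d ∧ b ≠ [] ∧ (G.endConf s (a ++ b)).1 = (G.endConf s a).1 := by
  obtain ⟨i, j, hij, heq⟩ := Fintype.exists_ne_map_eq_of_card_lt
    (fun i : Fin (Fintype.card G.Loc + 1) => (G.endConf s (l.take i)).1) (by simp)
  wlog hlt : (i : ℕ) < j generalizing i j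
  · exact this j i hij.symm heq.symm (lt_of_le_of_ne (not_lt.mp hlt) fun h => hij (Fin.ext h.symm))
  refine ⟨l.take i, (l.drop i).take (j - i), (l.drop i).drop (j - i), ?_, ?_, ?_⟩
  · rw [List.append_assoc, List.take_append_drop, List.take_append_drop]
  · rw [← List.length_pos_iff, List.length_take, List.length_drop]
    omega
  · rw [← List.take_add, Nat.add_sub_cancel' hlt.le]
    exact heq.symm

section Cycles

variable {ν : ℝ} {s : G.Conf} {a b d : List G.Move}

theorem isFinalMaxPlay_append_cycle_iff (hc : G.endConf (G.endConf s a) b = G.endConf s a) :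
    G.IsFinalMaxPlay ν s (a ++ b ++ d) ↔ G.IsFinalMaxPlay ν s (a ++ d) ∧
      G.ValidFrom (G.endConf s a) b ∧ G.followsAtMax (G.maxChoice ν) (G.endConf s a) b := by
  simp only [IsFinalMaxPlay, List.append_assoc, validFrom_append, followsAtMax_append,
    endConf_append, hc]
  tauto

theorem discretePrice_append_cycle (hc : G.endConf (G.endConf s a) b = G.endConf s a) :
    G.discretePrice ν s (a ++ b ++ d) =
      G.discretePrice ν s (a ++ d) + G.transWtSum (G.endConf s a) b := by
  simp only [discretePrice, List.append_assoc, transWtSum_append, endConf_append, hc]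
  push_cast
  ring

end Cycles

theorem AllUrgent.exists_shorter_optimal_play (hurg : G.AllUrgent) {ν v : ℝ} {s : G.Conf}
    {l : List G.Move} (hV : G.limVal ν s.1 = v) (hl : G.IsFinalMaxPlay ν s l)
    (hp : G.discretePrice ν s l = v) (hlen : Fintype.card G.Loc ≤ l.length) :
    ∃ l', G.IsFinalMaxPlay ν s l' ∧ G.discretePrice ν s l' = v ∧ l'.length < l.length := by
  obtain ⟨a, b, d, rfl, hb, hloc⟩ := exists_cycle_of_card_le_length s hlen
  have hab := ((validFrom_append _ _ _).mp hl.1).1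
  have hc : G.endConf (G.endConf s a) b = G.endConf s a := by
    rw [← endConf_append]
    refine Prod.ext hloc ?_
    rw [hurg.endConf_clock hab, hurg.endConf_clock ((validFrom_append _ _ _).mp hab).1]
  obtain ⟨hcut, hcycle⟩ := (isFinalMaxPlay_append_cycle_iff hc).mp hl
  have hpump : G.IsFinalMaxPlay ν s (a ++ b ++ (b ++ d)) :=
    (isFinalMaxPlay_append_cycle_iff hc).mpr ⟨by rwa [← List.append_assoc], hcycle⟩
  -- the cycle has weight `0`, since cutting and repeating it both yield prices `≥ v`
  have hcut_ge : v ≤ G.discretePrice ν s (a ++ d) := by exact_mod_cast hV ▸ hcut.limVal_le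
  have hpump_ge : v ≤ G.discretePrice ν s (a ++ b ++ (b ++ d)) := by
    exact_mod_cast hV ▸ hpump.limVal_le
  have hprice := discretePrice_append_cycle (ν := ν) (d := d) hc
  rw [discretePrice_append_cycle hc, ← List.append_assoc] at hpump_ge
  refine ⟨a ++ d, hcut, by linarith, ?_⟩
  simp only [List.length_append]
  have := List.length_pos_iff.mpr hb
  omega

theorem AllUrgent.exists_optimal_play_length_lt (hurg : G.AllUrgent) {ℓ : G.Loc} {ν v : ℝ}
    (hs : G.validConf (ℓ, ν)) (hV : G.limVal ν ℓ = v) :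
    ∃ l, G.IsFinalMaxPlay ν (ℓ, ν) l ∧ G.discretePrice ν (ℓ, ν) l = v ∧
      l.length < Fintype.card G.Loc := by
  have hex : ∃ n l, G.IsFinalMaxPlay ν (ℓ, ν) l ∧ G.discretePrice ν (ℓ, ν) l = v ∧
      l.length = n :=
    let ⟨l, hl, hp⟩ := exists_isFinalMaxPlay_discretePrice_eq hs hV
    ⟨_, l, hl, hp, rfl⟩
  obtain ⟨l, hl, hp, hlen⟩ := Nat.find_spec hex
  refine ⟨l, hl, hp, not_le.mp fun hcard => ?_⟩
  obtain ⟨l', hl', hp', hlt⟩ := hurg.exists_shorter_optimal_play hV hl hp hcard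
  exact Nat.find_min hex (hlen ▸ hlt) ⟨l', hl', hp', rfl⟩

theorem wT_nonneg : 0 ≤ G.wT :=
  Real.iSup_nonneg fun _ => by split_ifs <;> positivity

theorem abs_transWt_le_wT {ℓ ℓ' : G.Loc} (h : G.trans ℓ ℓ') :
    |(G.transWt ℓ ℓ' : ℝ)| ≤ G.wT := by
  have := le_ciSup (Set.finite_range fun p : G.Loc × G.Loc =>
    if G.trans p.1 p.2 then |(G.transWt p.1 p.2 : ℝ)| else 0).bddAbove (ℓ, ℓ')
  rwa [if_pos h] at this

theorem abs_transWtSum_le {s : G.Conf} {l : List G.Move} (hl : G.ValidFrom s l) :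
    |(G.transWtSum s l : ℝ)| ≤ l.length * G.wT := by
  induction l generalizing s with
  | nil => simp [transWtSum]
  | cons m l ih =>
    simp only [transWtSum, Int.cast_add, List.length_cons, Nat.cast_succ]
    calc _ ≤ |(G.transWt s.1 m.tgt : ℝ)| + |(G.transWtSum (G.applyMove s m) l : ℝ)| :=
          abs_add_le _ _
      _ ≤ G.wT + l.length * G.wT := add_le_add (abs_transWt_le_wT hl.1.2.2.1) (ih hl.2)
      _ = _ := by ring

end SPTG

open SPTG in
theorem urgent_value_in_FG_general (G : SPTG) (hurg : ∀ ℓ : G.Loc, ¬G.isFin ℓ → G.isUrg ℓ)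
    (ℓ : G.Loc) (ν : ℝ) (hν0 : 0 ≤ ν) (hνr : ν ≤ G.r)
    (hfin : ∃ v : ℝ, G.val ℓ ν = (v : EReal)) :
    ∃ (k : ℤ) (ℓ' : G.Loc), G.isFin ℓ' ∧
      -(((Fintype.card G.Loc : ℝ) - 1) * G.wT) ≤ (k : ℝ) ∧
      (k : ℝ) ≤ ((Fintype.card G.Loc : ℝ) - 1) * G.wT ∧
      G.val ℓ ν = (((k : ℝ) + G.finalCost ℓ' ν : ℝ) : EReal) := by
  obtain ⟨v, hv⟩ := hfin
  have hs : G.validConf (ℓ, ν) := ⟨hν0, hνr⟩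
  have hV : G.limVal ν ℓ = v := (AllUrgent.val_eq_limVal hurg hs).symm.trans hv
  obtain ⟨l, hl, hp, hlen⟩ := AllUrgent.exists_optimal_play_length_lt hurg hs hV
  have hk : |(G.transWtSum (ℓ, ν) l : ℝ)| ≤ ((Fintype.card G.Loc : ℝ) - 1) * G.wT := by
    have hlen' : (l.length : ℝ) ≤ Fintype.card G.Loc - 1 := by
      rw [le_sub_iff_add_le]
      exact_mod_cast hlen
    exact (abs_transWtSum_le hl.1).trans (mul_le_mul_of_nonneg_right hlen' wT_nonneg)
  exact ⟨_, _, hl.2.2, neg_le_of_abs_le hk, le_of_abs_le hk, hv.trans (congrArg _ hp.symm)⟩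

open SPTG in
/-- **Lemma: finite values come from `F_G`.** In an `r`-SPTG with only
urgent (non-final) locations, every finite value `Val_G(ℓ,ν)` is of the form
`k + φ_{ℓ'}(ν)` with `ℓ' ∈ L_Fin` and `k ∈ ℤ`, `|k| ≤ (|L|-1)·w_T`. -/
theorem urgent_value_in_FG (G : SPTG) (hq : ∃ q : ℚ, G.r = (q : ℝ))
    (hrat : G.ratFinal) (hurg : ∀ ℓ : G.Loc, ¬G.isFin ℓ → G.isUrg ℓ)
    (ℓ : G.Loc) (ν : ℝ) (hν0 : 0 ≤ ν) (hνr : ν ≤ G.r)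
    (hfin : ∃ v : ℝ, G.val ℓ ν = (v : EReal)) :
    ∃ (k : ℤ) (ℓ' : G.Loc), G.isFin ℓ' ∧
      -(((Fintype.card G.Loc : ℝ) - 1) * G.wT) ≤ (k : ℝ) ∧
      (k : ℝ) ≤ ((Fintype.card G.Loc : ℝ) - 1) * G.wT ∧
      G.val ℓ ν = (((k : ℝ) + G.finalCost ℓ' ν : ℝ) : EReal) :=
  urgent_value_in_FG_general G hurg ℓ ν hν0 hνr hfin
end
end

section
/- Let G be an SPTG with Val_G(ℓ,ν) ∈ ℝ for all configurations, r ∈ (0,1], and L′ a set of non-urgent non-final locations of G. For every location ℓ ∈ L′ ∩ L_Min and every ν ∈ [0,r], Val_{G_{L′,r}}(ℓ,ν) ≤ (r−ν)·π(ℓ) + Val_G(ℓ,r); and for every ℓ ∈ L′ ∩ L_Max and every ν ∈ [0,r], Val_{G_{L′,r}}(ℓ,ν) ≥ (r−ν)·π(ℓ) + Val_G(ℓ,r). -/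
/-!
Formalization of (simple) priced timed games (SPTGs) following
"One-Clock Priced Timed Games with Negative Weights"
(Brihaye, Geeraerts, Haddad, Lefaucheux, Monmege).
-/

noncomputable section
open scoped Classical

namespace SPTG

/-- Clamp a real number into `[0, G.r]`. -/
def clampR (G : SPTG) (x : ℝ) : ℝ := max 0 (min x G.r)

/-- The game `Waiting(G, r, x)`: every non-urgent non-final location `ℓ` gets a fresh
final clone `ℓ^f` (represented by `Sum.inr ℓ`) with final cost function
`ν ↦ (r - ν)·π(ℓ) + x_ℓ`, reachable from `ℓ` by a new weight-0 transition, and the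
clock is now constrained to `[0, r]`. -/
def Waiting (G : SPTG) (r : ℝ) (x : G.Loc → ℝ) : SPTG where
  Loc := G.Loc ⊕ G.Loc
  isMin := Sum.elim G.isMin fun _ => False
  isMax := Sum.elim G.isMax fun _ => False
  isFin := Sum.elim G.isFin fun _ => True
  partition := by
    rintro (ℓ | ℓ)
    · simpa using G.partition ℓ
    · simp
  isUrg := Sum.elim G.isUrg fun _ => False
  urg_not_fin := by
    rintro (ℓ | ℓ) h
    · simp only [Sum.elim_inl] at h ⊢
      exact G.urg_not_fin ℓ h
    · exact h.elim
  trans := fun a b =>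
    match a, b with
    | Sum.inl ℓ, Sum.inl ℓ' => G.trans ℓ ℓ'
    | Sum.inl ℓ, Sum.inr ℓ' => ℓ' = ℓ ∧ ¬G.isUrg ℓ ∧ ¬G.isFin ℓ
    | Sum.inr _, _ => False
  trans_not_fin := by
    rintro (ℓ | ℓ) (ℓ' | ℓ') h
    · simp only [Sum.elim_inl]
      exact G.trans_not_fin ℓ ℓ' h
    · simp only [Sum.elim_inl]
      exact h.2.2
    · exact h.elim
    · exact h.elim
  r := G.clampR r
  r_nonneg := le_max_left _ _
  r_le_one := max_le zero_le_one ((min_le_right _ _).trans G.r_le_one)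
  finSlope := Sum.elim G.finSlope fun ℓ => -(G.locWt ℓ : ℝ)
  finIntercept := Sum.elim G.finIntercept fun ℓ => G.clampR r * (G.locWt ℓ : ℝ) + x ℓ
  locWt := Sum.elim G.locWt fun _ => 0
  transWt := fun a b =>
    match a, b with
    | Sum.inl ℓ, Sum.inl ℓ' => G.transWt ℓ ℓ'
    | _, _ => 0

/-- The game obtained from `G` by making every (non-final) location of `S` urgent. -/
def makeUrgent (G : SPTG) (S : Set G.Loc) : SPTG :=
  { G with
    isUrg := fun ℓ => G.isUrg ℓ ∨ (ℓ ∈ S ∧ ¬G.isFin ℓ)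
    urg_not_fin := by
      rintro ℓ (h | h)
      · exact G.urg_not_fin ℓ h
      · exact h.2 }

/-- `G_r = Waiting(G, r, (Val_G(ℓ, r))_ℓ)`. -/
def Gwait (G : SPTG) (r : ℝ) : SPTG :=
  G.Waiting r fun ℓ => (G.val ℓ r).toReal

/-- `G_{L',r}`: the game `G_r` in which every location of `L'` has been made urgent. -/
def GLr (G : SPTG) (S : Set G.Loc) (r : ℝ) : SPTG :=
  (G.Gwait r).makeUrgent (Sum.inl '' S)

/-- The operator `Next_{L'}(r)`. -/
def Next (G : SPTG) (S : Set G.Loc) (r : ℝ) : ℝ :=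
  sInf {r' : ℝ | 0 ≤ r' ∧ r' ≤ r ∧ ∀ (ℓ : G.Loc) (ν : ℝ), r' ≤ ν → ν ≤ r →
    (G.GLr S r).val (Sum.inl ℓ) ν = G.val ℓ ν}

end SPTG

/-!
From a non-urgent location `ℓ ∈ L'` of `G_{L',r}` the owner of `ℓ` can move at once, with
delay `0`, to the final clone `ℓ^f`, and this one-move play costs exactly
`(r - ν)·π(ℓ) + Val_G(ℓ,r)`. A Min strategy forcing that move bounds the value from above;
a Max strategy forcing it bounds the value from below.
-/

namespace SPTG

variable {H : SPTG}

lemma not_isMin_of_isMax {ℓ : H.Loc} (h : H.isMax ℓ) : ¬H.isMin ℓ := by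
  rcases H.partition ℓ with ⟨-, hmax, -⟩ | ⟨hmin, -, -⟩ | ⟨hmin, -, -⟩
  · exact absurd h hmax
  · exact hmin
  · exact hmin

lemma endConf_nil (s : H.Conf) : H.endConf s [] = s := rfl

def preferMove (H : SPTG) (m : H.Move) (e : H.Conf) : Option H.Move :=
  if H.canMove e m then some m else if h : ∃ m', H.canMove e m' then some h.choose else none

lemma preferMove_of_canMove {m : H.Move} {e : H.Conf} (h : H.canMove e m) :
    H.preferMove m e = some m :=
  if_pos h

lemma exists_preferMove_eq_some {m : H.Move} {e : H.Conf} (h : ¬H.deadlock e) :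
    ∃ m', H.preferMove m e = some m' ∧ H.canMove e m' := by
  rw [deadlock, not_not] at h
  by_cases hm : H.canMove e m
  · exact ⟨m, if_pos hm, hm⟩
  · exact ⟨h.choose, by rw [preferMove, if_neg hm, dif_pos h], h.choose_spec⟩

def MinStrategy.ofMove (m : H.Move) : H.MinStrategy where
  move s l := H.preferMove m (H.endConf s l)
  legal _ _ _ _ _ hd := exists_preferMove_eq_some hd

def MaxStrategy.ofMove (m : H.Move) : H.MaxStrategy where
  move s l := H.preferMove m (H.endConf s l)
  legal _ _ _ _ _ hd := exists_preferMove_eq_some hd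

lemma hist_one_ofMove_min {s : H.Conf} {m : H.Move} (hm : H.canMove s m) (hmin : H.isMin s.1)
    (σmax : H.MaxStrategy) : H.hist (MinStrategy.ofMove m) σmax s 1 = [m] := by
  have hd : ¬H.deadlock s := fun h => h ⟨m, hm⟩
  change H.step _ _ s [] = [m]
  rw [step, endConf_nil, if_neg hd, if_pos hmin]
  change (match H.preferMove m s with | some m' => [] ++ [m'] | none => []) = [m]
  rw [preferMove_of_canMove hm]
  rfl

lemma hist_one_ofMove_max {s : H.Conf} {m : H.Move} (hm : H.canMove s m) (hmax : H.isMax s.1)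
    (σmin : H.MinStrategy) : H.hist σmin (MaxStrategy.ofMove m) s 1 = [m] := by
  have hd : ¬H.deadlock s := fun h => h ⟨m, hm⟩
  change H.step _ _ s [] = [m]
  rw [step, endConf_nil, if_neg hd, if_neg (not_isMin_of_isMax hmax)]
  change (match H.preferMove m s with | some m' => [] ++ [m'] | none => []) = [m]
  rw [preferMove_of_canMove hm]
  rfl

lemma playCost_of_hist_one {s : H.Conf} {m : H.Move} {σmin : H.MinStrategy}
    {σmax : H.MaxStrategy} (hs : ¬H.isFin s.1) (hfin : H.isFin m.tgt)
    (h1 : H.hist σmin σmax s 1 = [m]) :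
    H.playCost s σmin σmax = H.finPrice s [m] := by
  have hreach : H.isFin (H.endConf s (H.hist σmin σmax s 1)).1 := by rwa [h1]
  have hex : ∃ n, H.isFin (H.endConf s (H.hist σmin σmax s n)).1 := ⟨1, hreach⟩
  have hfind : Nat.find hex = 1 :=
    (Nat.find_eq_iff hex).2 ⟨hreach, fun n hn => by obtain rfl : n = 0 := (by omega); exact hs⟩
  rw [playCost, dif_pos hex, hfind, h1]

lemma upperVal_le_finPrice {s : H.Conf} {m : H.Move} (hm : H.canMove s m)
    (hmin : H.isMin s.1) (hfin : H.isFin m.tgt) :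
    H.upperVal s ≤ H.finPrice s [m] :=
  (iInf_le _ (MinStrategy.ofMove m)).trans <| iSup_le fun σmax =>
    (playCost_of_hist_one (H.trans_not_fin _ _ hm.2.2.1) hfin
      (hist_one_ofMove_min hm hmin σmax)).le

lemma finPrice_le_upperVal {s : H.Conf} {m : H.Move} (hm : H.canMove s m)
    (hmax : H.isMax s.1) (hfin : H.isFin m.tgt) :
    (H.finPrice s [m] : EReal) ≤ H.upperVal s :=
  le_iInf fun σmin => le_trans
    (playCost_of_hist_one (H.trans_not_fin _ _ hm.2.2.1) hfin
      (hist_one_ofMove_max hm hmax σmin)).ge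
    (le_iSup _ (MaxStrategy.ofMove m))

lemma clampR_eq_self {G : SPTG} {r : ℝ} (hr0 : 0 ≤ r) (hr : r ≤ G.r) : G.clampR r = r := by
  rw [clampR, min_eq_left hr, max_eq_right hr0]

variable (G : SPTG) (r : ℝ) (x : G.Loc → ℝ) (S : Set (G.Loc ⊕ G.Loc))

def toFinalClone (ℓ : G.Loc) : ((G.Waiting r x).makeUrgent S).Move := ⟨0, Sum.inr ℓ⟩

lemma canMove_toFinalClone {ℓ : G.Loc} (hu : ¬G.isUrg ℓ) (hf : ¬G.isFin ℓ) {ν : ℝ}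
    (hν : ν ≤ G.clampR r) :
    ((G.Waiting r x).makeUrgent S).canMove (Sum.inl ℓ, ν) (toFinalClone G r x S ℓ) :=
  ⟨le_rfl, (add_zero ν).symm ▸ hν, ⟨rfl, hu, hf⟩, fun _ => rfl⟩

lemma finPrice_toFinalClone (ℓ : G.Loc) (ν : ℝ) :
    ((G.Waiting r x).makeUrgent S).finPrice (Sum.inl ℓ, ν) [toFinalClone G r x S ℓ] =
      (G.clampR r - ν) * G.locWt ℓ + x ℓ := by
  simp only [finPrice, moveCost, Waiting, makeUrgent, toFinalClone, Int.cast_zero, Sum.elim_inl,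
    zero_mul, add_zero, applyMove, Sum.elim_inr, ↓reduceIte, finalCost, neg_mul, zero_add]
  ring

end SPTG

open SPTG in
theorem GLr_value_vs_waiting_general (G : SPTG) (hr : G.r = 1)
    (r : ℝ) (hr1 : r ≤ 1)
    (L' : Set G.Loc) (hL' : ∀ ℓ ∈ L', ¬G.isUrg ℓ ∧ ¬G.isFin ℓ) :
    ∀ ℓ ∈ L', ∀ ν : ℝ, 0 ≤ ν → ν ≤ r →
      (G.isMin ℓ → (G.GLr L' r).val (Sum.inl ℓ) ν ≤
        (((r - ν) * (G.locWt ℓ : ℝ) + (G.val ℓ r).toReal : ℝ) : EReal)) ∧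
      (G.isMax ℓ → (((r - ν) * (G.locWt ℓ : ℝ) + (G.val ℓ r).toReal : ℝ) : EReal) ≤
        (G.GLr L' r).val (Sum.inl ℓ) ν) := by
  intro ℓ hℓ ν hν0 hνr
  obtain ⟨hu, hf⟩ := hL' ℓ hℓ
  have hclamp : G.clampR r = r := clampR_eq_self (hν0.trans hνr) (hr ▸ hr1)
  have hmove := canMove_toFinalClone G r (fun ℓ => (G.val ℓ r).toReal) (Sum.inl '' L') hu hf
    (hclamp.symm ▸ hνr)
  have hprice := finPrice_toFinalClone G r (fun ℓ => (G.val ℓ r).toReal) (Sum.inl '' L') ℓ ν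
  rw [hclamp] at hprice
  refine ⟨fun hmin => ?_, fun hmax => ?_⟩
  · exact hprice ▸ upperVal_le_finPrice hmove hmin trivial
  · exact hprice ▸ finPrice_le_upperVal hmove hmax trivial

open SPTG in
/-- **Lemma: waiting until `r` bounds the value in `G_{L',r}`.**
For every `ℓ ∈ L' ∩ L_Min` (resp. `L' ∩ L_Max`) and `ν ∈ [0,r]`,
`Val_{G_{L',r}}(ℓ,ν) ≤ (r-ν)·π(ℓ) + Val_G(ℓ,r)` (resp. `≥`). -/
theorem GLr_value_vs_waiting (G : SPTG) (hr : G.r = 1) (hrat : G.ratFinal)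
    (hfin : ∀ ℓ : G.Loc, ∀ ν : ℝ, 0 ≤ ν → ν ≤ 1 → ∃ v : ℝ, G.val ℓ ν = (v : EReal))
    (r : ℝ) (hr0 : 0 < r) (hr1 : r ≤ 1)
    (L' : Set G.Loc) (hL' : ∀ ℓ ∈ L', ¬G.isUrg ℓ ∧ ¬G.isFin ℓ) :
    ∀ ℓ ∈ L', ∀ ν : ℝ, 0 ≤ ν → ν ≤ r →
      (G.isMin ℓ → (G.GLr L' r).val (Sum.inl ℓ) ν ≤
        (((r - ν) * (G.locWt ℓ : ℝ) + (G.val ℓ r).toReal : ℝ) : EReal)) ∧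
      (G.isMax ℓ → (((r - ν) * (G.locWt ℓ : ℝ) + (G.val ℓ r).toReal : ℝ) : EReal) ≤
        (G.GLr L' r).val (Sum.inl ℓ) ν) :=
  GLr_value_vs_waiting_general G hr r hr1 L' hL'
end
end
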